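/- If n ≥ m ≥ 1, then the burning number of the comb graph C_{n,m} equals m − 1 + ⌈√(n − m + 1)⌉. -/
import Mathlib

noncomputable def burningNumber {V : Type*} (G : SimpleGraph V) : ℕ :=
  sInf {k | ∃ v : Fin k → V, ∀ u : V, ∃ i : Fin k, G.dist (v i) u ≤ k - 1 - i.val}

def comb (n m : ℕ) : SimpleGraph (Fin n × Fin m) :=
  SimpleGraph.fromRel (fun p q =>
    (p.1 = q.1 ∧ p.2.val + 1 = q.2.val) ∨
    (p.2.val = 0 ∧ q.2.val = 0 ∧ p.1.val + 1 = q.1.val))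

namespace CombAux

variable {n m : ℕ}

lemma comb_adj_iff (p q : Fin n × Fin m) :
    (comb n m).Adj p q ↔ p ≠ q ∧
      (((p.1 = q.1 ∧ p.2.val + 1 = q.2.val) ∨ (p.2.val = 0 ∧ q.2.val = 0 ∧ p.1.val + 1 = q.1.val)) ∨
       ((q.1 = p.1 ∧ q.2.val + 1 = p.2.val) ∨ (q.2.val = 0 ∧ p.2.val = 0 ∧ q.1.val + 1 = p.1.val))) :=
  SimpleGraph.fromRel_adj _ p q

lemma adj_tooth (a : Fin n) {b b' : Fin m} (h : b.val + 1 = b'.val) :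
    (comb n m).Adj (a, b) (a, b') := by
  rw [comb_adj_iff]
  refine ⟨?_, Or.inl (Or.inl ⟨rfl, h⟩)⟩
  intro he
  rw [Prod.ext_iff] at he
  have hb : b.val = b'.val := congrArg Fin.val he.2
  omega

lemma adj_spine {a a' : Fin n} (z : Fin m) (hz : z.val = 0) (h : a.val + 1 = a'.val) :
    (comb n m).Adj (a, z) (a', z) := by
  rw [comb_adj_iff]
  refine ⟨?_, Or.inl (Or.inr ⟨hz, hz, h⟩)⟩
  intro he
  rw [Prod.ext_iff] at he
  have ha : a.val = a'.val := congrArg Fin.val he.1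
  omega

lemma walk_col (a : Fin n) : ∀ (d : ℕ) (b b' : Fin m), b.val + d = b'.val →
    ∃ w : (comb n m).Walk (a, b) (a, b'), w.length = d := by
  intro d
  induction d with
  | zero =>
    intro b b' h
    have : b = b' := Fin.ext (by omega)
    subst this
    exact ⟨SimpleGraph.Walk.nil, rfl⟩
  | succ d ih =>
    intro b b' h
    have hlt : b.val + 1 < m := by have := b'.isLt; omega
    obtain ⟨w, hw⟩ := ih ⟨b.val + 1, hlt⟩ b' (by simp; omega)
    exact ⟨SimpleGraph.Walk.cons (adj_tooth a rfl) w, by simp [hw]⟩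

lemma walk_spine (z : Fin m) (hz : z.val = 0) : ∀ (d : ℕ) (a a' : Fin n), a.val + d = a'.val →
    ∃ w : (comb n m).Walk (a, z) (a', z), w.length = d := by
  intro d
  induction d with
  | zero =>
    intro a a' h
    have : a = a' := Fin.ext (by omega)
    subst this
    exact ⟨SimpleGraph.Walk.nil, rfl⟩
  | succ d ih =>
    intro a a' h
    have hlt : a.val + 1 < n := by have := a'.isLt; omega
    obtain ⟨w, hw⟩ := ih ⟨a.val + 1, hlt⟩ a' (by simp; omega)
    exact ⟨SimpleGraph.Walk.cons (adj_spine z hz rfl) w, by simp [hw]⟩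

lemma walk_col' (a : Fin n) (b b' : Fin m) :
    ∃ w : (comb n m).Walk (a, b) (a, b'), w.length = (b.val - b'.val) + (b'.val - b.val) := by
  rcases le_total b.val b'.val with h | h
  · obtain ⟨w, hw⟩ := walk_col a (b'.val - b.val) b b' (by omega)
    exact ⟨w, by omega⟩
  · obtain ⟨w, hw⟩ := walk_col a (b.val - b'.val) b' b (by omega)
    exact ⟨w.reverse, by simp [hw]; omega⟩

lemma walk_spine' (z : Fin m) (hz : z.val = 0) (a a' : Fin n) :
    ∃ w : (comb n m).Walk (a, z) (a', z), w.length = (a.val - a'.val) + (a'.val - a.val) := by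
  rcases le_total a.val a'.val with h | h
  · obtain ⟨w, hw⟩ := walk_spine z hz (a'.val - a.val) a a' (by omega)
    exact ⟨w, by omega⟩
  · obtain ⟨w, hw⟩ := walk_spine z hz (a.val - a'.val) a' a (by omega)
    exact ⟨w.reverse, by simp [hw]; omega⟩

lemma walk_any (hm : 1 ≤ m) (a a' : Fin n) (b b' : Fin m) :
    ∃ w : (comb n m).Walk (a, b) (a', b'),
      w.length = b.val + ((a.val - a'.val) + (a'.val - a.val)) + b'.val := by
  obtain ⟨w1, h1⟩ := walk_col a b.val (⟨0, hm⟩ : Fin m) b (by simp)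
  obtain ⟨w2, h2⟩ := walk_spine' (⟨0, hm⟩ : Fin m) rfl a a'
  obtain ⟨w3, h3⟩ := walk_col a' b'.val (⟨0, hm⟩ : Fin m) b' (by simp)
  exact ⟨(w1.reverse.append w2).append w3, by simp [h1, h2, h3]⟩

lemma comb_reachable (hm : 1 ≤ m) (u v : Fin n × Fin m) : (comb n m).Reachable u v := by
  obtain ⟨w, _⟩ := walk_any hm u.1 v.1 u.2 v.2
  exact ⟨w⟩

lemma dist_le_any (hm : 1 ≤ m) (a a' : Fin n) (b b' : Fin m) :
    (comb n m).dist (a, b) (a', b') ≤ b.val + ((a.val - a'.val) + (a'.val - a.val)) + b'.val := by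
  obtain ⟨w, hw⟩ := walk_any hm a a' b b'
  exact hw ▸ SimpleGraph.dist_le w

lemma dist_le_col (a : Fin n) (b b' : Fin m) :
    (comb n m).dist (a, b) (a, b') ≤ (b.val - b'.val) + (b'.val - b.val) := by
  obtain ⟨w, hw⟩ := walk_col' a b b'
  exact hw ▸ SimpleGraph.dist_le w

lemma dist_le_any' (hm : 1 ≤ m) (x y : ℕ) (hx : x < n) (hy : y < m) (c : Fin n) (b : Fin m) :
    (comb n m).dist (⟨x, hx⟩, ⟨y, hy⟩) (c, b) ≤ y + ((x - c.val) + (c.val - x)) + b.val :=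
  dist_le_any hm ⟨x, hx⟩ c ⟨y, hy⟩ b

lemma dist_le_col' (x y : ℕ) (hx : x < n) (hy : y < m) (c : Fin n) (b : Fin m)
    (hxc : x = c.val) :
    (comb n m).dist (⟨x, hx⟩, ⟨y, hy⟩) (c, b) ≤ (y - b.val) + (b.val - y) := by
  have hc : (⟨x, hx⟩ : Fin n) = c := Fin.ext hxc
  subst hc
  exact dist_le_col _ ⟨y, hy⟩ b

def pot (n m : ℕ) (c : Fin n) : Fin n × Fin m → ℤ :=
  fun p => if p.1.val = c.val then (p.2.val : ℤ) else -(((p.1.val : ℤ) - (c.val : ℤ)).natAbs : ℤ)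

lemma pot_lip (c : Fin n) {u v : Fin n × Fin m} (h : (comb n m).Adj u v) :
    (pot n m c u - pot n m c v).natAbs ≤ 1 := by
  rw [comb_adj_iff] at h
  obtain ⟨-, h⟩ := h
  unfold pot
  rcases h with (⟨h1, h2⟩ | ⟨h1, h2, h3⟩) | (⟨h1, h2⟩ | ⟨h1, h2, h3⟩)
  · have hv : u.1.val = v.1.val := congrArg Fin.val h1
    split_ifs <;> omega
  · split_ifs <;> omega
  · have hv : v.1.val = u.1.val := congrArg Fin.val h1
    split_ifs <;> omega
  · split_ifs <;> omega

lemma walk_le_pot (φ : Fin n × Fin m → ℤ)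
    (hφ : ∀ u v : Fin n × Fin m, (comb n m).Adj u v → (φ u - φ v).natAbs ≤ 1)
    {u v : Fin n × Fin m} (w : (comb n m).Walk u v) :
    (φ u - φ v).natAbs ≤ w.length := by
  induction w with
  | nil => simp
  | @cons x y z h p ih =>
    have h1 := hφ x y h
    simp only [SimpleGraph.Walk.length_cons]
    omega

lemma dist_ge_top (hm : 1 ≤ m)
    (a0 c : Fin n) (b0 bt : Fin m) (hbt : bt.val = m - 1) (hne : a0.val ≠ c.val) :
    (a0.val - c.val) + (c.val - a0.val) + (m - 1) ≤ (comb n m).dist (a0, b0) (c, bt) := by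
  obtain ⟨w, hw⟩ := (comb_reachable hm (a0, b0) (c, bt)).exists_walk_length_eq_dist
  have h := walk_le_pot (pot n m c) (fun u v h => pot_lip c h) w
  rw [hw] at h
  unfold pot at h
  rw [if_neg hne, if_pos rfl] at h
  dsimp only at h
  omega

lemma sum_range_sub_const (k t : ℕ) :
    ∑ i ∈ Finset.range k, (i - t) = ∑ i ∈ Finset.range (k - t), i := by
  induction k with
  | zero => simp
  | succ k ih =>
    rw [Finset.sum_range_succ, ih]
    rcases le_or_gt t k with h | h
    · have hk : k + 1 - t = (k - t) + 1 := by omega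
      rw [hk, Finset.sum_range_succ]
    · have h1 : k - t = 0 := by omega
      have h2 : k + 1 - t = 0 := by omega
      have h3 : k - t = 0 := h1
      simp [h1, h2, Nat.sub_eq_zero_of_le (le_of_lt h)]

end CombAux

open CombAux in
theorem burning_comb_spine_dominant (n m : ℕ) (hm : 1 ≤ m) (hmn : m ≤ n) :
    burningNumber (comb n m) = m - 1 + ⌈Real.sqrt ((n - m + 1 : ℕ))⌉₊ := by
  classical
  have hn : 1 ≤ n := hm.trans hmn
  set N : ℕ := n - m + 1 with hNdef
  set s : ℕ := ⌈Real.sqrt (N : ℕ)⌉₊ with hsdef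
  have hN1 : 1 ≤ N := by omega
  have hs1 : 1 ≤ s := by
    rw [hsdef]
    exact Nat.ceil_pos.mpr (Real.sqrt_pos.mpr (by exact_mod_cast hN1))
  have hNs : N ≤ s * s := by
    have h1 : Real.sqrt N ≤ (s : ℝ) := Nat.le_ceil _
    have h0 : (0 : ℝ) ≤ (N : ℝ) := by positivity
    have h2 : (N : ℝ) ≤ (s : ℝ) * (s : ℝ) := by
      nlinarith [Real.sq_sqrt h0, Real.sqrt_nonneg (N : ℝ)]
    exact_mod_cast h2
  have hNs' : (s - 1) * (s - 1) < N := by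
    have h2 : ((s - 1 : ℕ) : ℝ) < Real.sqrt N := by
      apply Nat.lt_ceil.mp
      rw [← hsdef]
      omega
    have h3 : ((s - 1 : ℕ) : ℝ) * ((s - 1 : ℕ) : ℝ) < (N : ℝ) := by
      nlinarith [Real.sq_sqrt (show (0 : ℝ) ≤ (N : ℝ) by positivity), Real.sqrt_nonneg (N : ℝ)]
    exact_mod_cast h3
  -- upper bound: explicit burning scheme
  set L : ℕ := n - s * s with hLdef
  have hL : L ≤ m - 1 := by omega
  have hss : s ≤ s * s := Nat.le_mul_of_pos_left s hs1
  have hnL : n ≤ L + s * s := by omega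
  set spinePos : ℕ → ℕ := fun i =>
    if i < s then min (L + s * s - (s - i) * (s - i) + (s - 1 - i)) (n - 1)
    else if m - 1 + s - i ≤ L then L - (m - 1 + s - i) else 0 with hspdef
  set toothPos : ℕ → ℕ := fun i =>
    if i < s then 0 else if m - 1 + s - i ≤ L then m - 1 else 0 with htpdef
  have hspb : ∀ i, spinePos i < n := by
    intro i
    simp only [hspdef]
    split_ifs <;> omega
  have htpb : ∀ i, toothPos i < m := by
    intro i
    simp only [htpdef]
    split_ifs <;> omega
  set V : Fin (m - 1 + s) → Fin n × Fin m :=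
    fun i => (⟨spinePos i.val, hspb i.val⟩, ⟨toothPos i.val, htpb i.val⟩) with hVdef
  have hupper : (m - 1 + s) ∈ {k : ℕ | ∃ v : Fin k → Fin n × Fin m,
      ∀ u, ∃ i : Fin k, (comb n m).dist (v i) u ≤ k - 1 - i.val} := by
    refine ⟨V, ?_⟩
    rintro ⟨c, b⟩
    by_cases hcL : L ≤ c.val
    · -- covered by a big (spine) source
      set e : ℕ := s * s - 1 - (c.val - L) with hedef
      set q : ℕ := Nat.sqrt e with hqdef
      have hq1 : q * q ≤ e := by rw [hqdef]; simpa [pow_two] using Nat.sqrt_le' e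
      have hq2 : e < (q + 1) * (q + 1) := by rw [hqdef]; simpa [pow_two, Nat.succ_eq_add_one] using Nat.lt_succ_sqrt' e
      have hq2' : e < q * q + (2 * q + 1) := by
        calc e < (q + 1) * (q + 1) := hq2
          _ = q * q + (2 * q + 1) := by ring
      have hcn : c.val < n := c.isLt
      have hd : c.val - L < s * s := by omega
      have hqs : q < s := by
        by_contra hqs
        push_neg at hqs
        have : s * s ≤ q * q := Nat.mul_le_mul hqs hqs
        omega
      have hZX : q * q + (2 * q + 1) ≤ s * s := by
        have hq1s : q + 1 ≤ s := hqs
        calc q * q + (2 * q + 1) = (q + 1) * (q + 1) := by ring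
          _ ≤ s * s := Nat.mul_le_mul hq1s hq1s
      set i0 : ℕ := s - 1 - q with hi0def
      have hi0s : i0 < s := by omega
      have hi0K : i0 < m - 1 + s := by omega
      have hprod : (s - i0) * (s - i0) = q * q + (2 * q + 1) := by
        rw [show s - i0 = q + 1 by omega]; ring
      have hsp1 : spinePos i0 = min (L + s * s - (s - i0) * (s - i0) + (s - 1 - i0)) (n - 1) := by
        simp only [hspdef]
        rw [if_pos hi0s]
      have htp1 : toothPos i0 = 0 := by
        simp only [htpdef]
        rw [if_pos hi0s]
      refine ⟨⟨i0, hi0K⟩, ?_⟩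
      have hVeq : V ⟨i0, hi0K⟩ = (⟨spinePos i0, hspb i0⟩, ⟨toothPos i0, htpb i0⟩) := rfl
      rw [hVeq]
      refine le_trans (dist_le_any' hm _ _ (hspb i0) (htpb i0) c b) ?_
      have hival : (⟨i0, hi0K⟩ : Fin (m - 1 + s)).val = i0 := rfl
      rw [hival]
      have hb : b.val < m := b.isLt
      have hsm1 : s - 1 - i0 = q := by omega
      omega
    · push_neg at hcL
      by_cases hb2 : b.val + (L - c.val) ≤ m - 1
      · -- covered by the largest source
        have h0s : (0 : ℕ) < s := hs1
        have hi0K : 0 < m - 1 + s := by omega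
        have hsp1 : spinePos 0 = min (L + s * s - (s - 0) * (s - 0) + (s - 1 - 0)) (n - 1) := by
          simp only [hspdef]
          rw [if_pos h0s]
        have hprod0 : (s - 0) * (s - 0) = s * s := by norm_num
        have htp1 : toothPos 0 = 0 := by
          simp only [htpdef]
          rw [if_pos h0s]
        refine ⟨⟨0, hi0K⟩, ?_⟩
        have hVeq : V ⟨0, hi0K⟩ = (⟨spinePos 0, hspb 0⟩, ⟨toothPos 0, htpb 0⟩) := rfl
        rw [hVeq]
        refine le_trans (dist_le_any' hm _ _ (hspb 0) (htpb 0) c b) ?_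
        have hival : (⟨0, hi0K⟩ : Fin (m - 1 + s)).val = 0 := rfl
        rw [hival]
        have hb : b.val < m := b.isLt
        omega
      · -- covered by a tooth-top source
        push_neg at hb2
        set j : ℕ := L - c.val with hjdef
        have hj1 : 1 ≤ j := by omega
        have hjL : j ≤ L := by omega
        set i0 : ℕ := m - 1 + s - j with hi0def
        have hi0K : i0 < m - 1 + s := by omega
        have hi0s : ¬ i0 < s := by omega
        have hKi : m - 1 + s - i0 = j := by omega
        have hjle : m - 1 + s - i0 ≤ L := by omega
        have hsp1 : spinePos i0 = L - (m - 1 + s - i0) := by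
          simp only [hspdef]
          rw [if_neg hi0s, if_pos hjle]
        have htp1 : toothPos i0 = m - 1 := by
          simp only [htpdef]
          rw [if_neg hi0s, if_pos hjle]
        refine ⟨⟨i0, hi0K⟩, ?_⟩
        have hVeq : V ⟨i0, hi0K⟩ = (⟨spinePos i0, hspb i0⟩, ⟨toothPos i0, htpb i0⟩) := rfl
        rw [hVeq]
        refine le_trans (dist_le_col' _ _ (hspb i0) (htpb i0) c b (by omega)) ?_
        have hival : (⟨i0, hi0K⟩ : Fin (m - 1 + s)).val = i0 := rfl
        rw [hival]
        have hb : b.val < m := b.isLt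
        omega
  -- lower bound
  have hlower : ∀ k ∈ {k : ℕ | ∃ v : Fin k → Fin n × Fin m,
      ∀ u, ∃ i : Fin k, (comb n m).dist (v i) u ≤ k - 1 - i.val}, m - 1 + s ≤ k := by
    intro k hk
    obtain ⟨v, hv⟩ := hk
    by_contra hlt
    push_neg at hlt
    have htopb : m - 1 < m := by omega
    set top : Fin m := ⟨m - 1, htopb⟩ with htopdef
    set Scol : Fin k → Finset (Fin n) := fun i => Finset.univ.filter (fun c =>
      c = (v i).1 ∨ ((v i).1.val - c.val) + (c.val - (v i).1.val) + (m - 1) ≤ k - 1 - i.val)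
      with hScoldef
    have hcov : ∀ c : Fin n, ∃ i : Fin k, c ∈ Scol i := by
      intro c
      obtain ⟨i, hi⟩ := hv (c, top)
      refine ⟨i, ?_⟩
      simp only [hScoldef, Finset.mem_filter]
      refine ⟨Finset.mem_univ _, ?_⟩
      by_cases hceq : (v i).1.val = c.val
      · exact Or.inl (Fin.ext hceq).symm
      · right
        have hd := dist_ge_top hm (v i).1 c (v i).2 top rfl hceq
        have hvi : v i = ((v i).1, (v i).2) := rfl
        rw [← hvi] at hd
        omega
    have hcard : ∀ i : Fin k, (Scol i).card ≤ 2 * ((k - 1 - i.val) - (m - 1)) + 1 := by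
      intro i
      have hmaps : ∀ c ∈ Scol i, c.val ∈ Finset.Icc
          ((v i).1.val - ((k - 1 - i.val) - (m - 1))) ((v i).1.val + ((k - 1 - i.val) - (m - 1))) := by
        intro c hc
        simp only [hScoldef, Finset.mem_filter] at hc
        rw [Finset.mem_Icc]
        rcases hc.2 with h | h
        · rw [h]; omega
        · omega
      have hinj : Set.InjOn (fun c : Fin n => c.val) (Scol i) :=
        fun x _ y _ hxy => Fin.ext hxy
      have hle := Finset.card_le_card_of_injOn _ hmaps hinj
      rw [Nat.card_Icc] at hle
      omega
    have hn_le : n ≤ ∑ i : Fin k, (2 * ((k - 1 - i.val) - (m - 1)) + 1) := by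
      have h1 : (Finset.univ : Finset (Fin n)) ⊆
          Finset.univ.biUnion (fun i : Fin k => Scol i) := by
        intro c _
        obtain ⟨i, hi⟩ := hcov c
        exact Finset.mem_biUnion.mpr ⟨i, Finset.mem_univ _, hi⟩
      calc n = (Finset.univ : Finset (Fin n)).card := (Finset.card_fin n).symm
        _ ≤ (Finset.univ.biUnion (fun i : Fin k => Scol i)).card := Finset.card_le_card h1
        _ ≤ ∑ i : Fin k, (Scol i).card := Finset.card_biUnion_le
        _ ≤ _ := Finset.sum_le_sum (fun i _ => hcard i)
    have e1 : (∑ i : Fin k, (2 * ((k - 1 - i.val) - (m - 1)) + 1)) =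
        2 * (∑ i ∈ Finset.range k, ((k - 1 - i) - (m - 1))) + k := by
      rw [Fin.sum_univ_eq_sum_range (fun i => 2 * ((k - 1 - i) - (m - 1)) + 1) k,
        Finset.sum_add_distrib, Finset.sum_const, Finset.card_range, ← Finset.mul_sum]
      simp
    have e2 : (∑ i ∈ Finset.range k, ((k - 1 - i) - (m - 1))) =
        ∑ i ∈ Finset.range k, (i - (m - 1)) :=
      Finset.sum_range_reflect (fun i => i - (m - 1)) k
    have e2' := sum_range_sub_const k (m - 1)
    have e3 : (∑ i ∈ Finset.range (k - (m - 1)), i) ≤ ∑ i ∈ Finset.range (s - 1), i :=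
      Finset.sum_le_sum_of_subset (Finset.range_subset_range.mpr (by omega))
    have e4 : (∑ i ∈ Finset.range (s - 1), i) * 2 = (s - 1) * (s - 1 - 1) :=
      Finset.sum_range_id_mul_two (s - 1)
    have e5 : (s - 1) * (s - 1 - 1) + (s - 1) = (s - 1) * (s - 1) := by
      rcases Nat.eq_zero_or_pos (s - 1) with h | h
      · simp [h]
      · have hh : s - 1 - 1 + 1 = s - 1 := by omega
        calc (s - 1) * (s - 1 - 1) + (s - 1) = (s - 1) * ((s - 1 - 1) + 1) := by ring
          _ = (s - 1) * (s - 1) := by rw [hh]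
    omega
  unfold burningNumber
  exact le_antisymm (Nat.sInf_le hupper)
    (hlower _ (Nat.sInf_mem (Set.nonempty_of_mem hupper)))
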